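/- Let k ≥ 1 be an integer, h ≠ 0 a real number, t₀ ∈ ℝ, and let u₀, u₁, u₄, …, u_{k²} ∈ ℝ be values assigned to the nodes t₀ + i²·h, i = 0, …, k. Let L be the Lagrange interpolation polynomial of degree at most k through the non-equidistant points (t₀ + i²·h, u_{i²}), i = 0, …, k. Then the derivative of L at t₀ equals (1/h)·∑_{i=0}^k β_i^k u_{i²}, where β_0^k = −∑_{j=1}^k 1/j² and β_i^k = (−1)^{k−1}·(k!)² / (i² · ∏_{0≤j≤k, j≠i} (i² − j²)) for 1 ≤ i ≤ k. -/

import Mathlib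

/-!
Write the interpolant as `∑ u_{i²} ℓ_i` with `ℓ_i = ∏_{j ≠ i} (X - x_j) / (x_i - x_j)`, and note that
`t₀ = x_0` is itself a node. By the product rule `ℓ_0'(x_0) = ∑_{j ≠ 0} 1 / (x_0 - x_j)`, while for
`i ≠ 0` the factor vanishing at `x_0` must be the one differentiated, so
`ℓ_i'(x_0) = (x_i - x_0)⁻¹ ∏_{j ≠ 0, i} (x_0 - x_j) / (x_i - x_j)`. For `x_j = t₀ + j² h` these
ratios are `j² / (j² - i²)`, and `(k!)² = i² ∏_{j ≠ 0, i} j²` turns the product into `β_i^k`.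
-/

/-- The coefficients `β_i^k` of the non-equidistant derivative approximation:
`β_0^k = -∑_{j=1}^k 1/j²` and
`β_i^k = (-1)^(k-1)·(k!)² / (i² · ∏_{0≤j≤k, j≠i} (i² − j²))` for `1 ≤ i ≤ k`. -/
noncomputable def betaCoef (k i : ℕ) : ℝ :=
  if i = 0 then -(∑ j ∈ Finset.Icc 1 k, (1 : ℝ) / (j : ℝ) ^ 2)
  else (-1) ^ (k - 1) * ((Nat.factorial k : ℝ)) ^ 2 /
    ((i : ℝ) ^ 2 * ∏ j ∈ (Finset.range (k + 1)).erase i, ((i : ℝ) ^ 2 - (j : ℝ) ^ 2))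

open Finset Polynomial Lagrange

section Lagrange

variable {F ι : Type*} [Field F] [DecidableEq ι] {s : Finset ι} {v : ι → F} {i j : ι}

theorem derivative_basisDivisor (x y : F) : derivative (basisDivisor x y) = C (x - y)⁻¹ := by
  simp [basisDivisor]

theorem eval_basisDivisor (x y z : F) : (basisDivisor x y).eval z = (z - y) / (x - y) := by
  simp [basisDivisor, div_eq_inv_mul]

theorem eval_derivative_interpolate (r : ι → F) (x : F) :
    (derivative (interpolate s v r)).eval x =
      ∑ i ∈ s, r i * (derivative (Lagrange.basis s v i)).eval x := by
  simp [interpolate_apply, eval_finsetSum]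

theorem eval_derivative_basis_self (hvs : Set.InjOn v s) (hi : i ∈ s) :
    (derivative (Lagrange.basis s v i)).eval (v i) = ∑ j ∈ s.erase i, (v i - v j)⁻¹ := by
  rw [Lagrange.basis, derivative_prod_finset, eval_finsetSum]
  refine sum_congr rfl fun j _ => ?_
  have h_one : ∀ m ∈ (s.erase i).erase j, (basisDivisor (v i) (v m)).eval (v i) = 1 :=
    fun m hm => eval_basisDivisor_left_of_ne <| hvs.ne hi (mem_of_mem_erase (mem_of_mem_erase hm))
      (ne_of_mem_erase (mem_of_mem_erase hm)).symm
  rw [eval_mul, eval_prod, prod_congr rfl h_one, prod_const_one, one_mul, derivative_basisDivisor,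
    eval_C]

theorem eval_derivative_basis_of_ne (hij : i ≠ j) (hj : j ∈ s) :
    (derivative (Lagrange.basis s v i)).eval (v j) =
      (v i - v j)⁻¹ * ∏ m ∈ (s.erase i).erase j, (v j - v m) / (v i - v m) := by
  have hj' : j ∈ s.erase i := mem_erase.2 ⟨hij.symm, hj⟩
  rw [Lagrange.basis, derivative_prod_finset, eval_finsetSum, sum_eq_single_of_mem j hj']
  · simp only [eval_mul, eval_prod, eval_basisDivisor, derivative_basisDivisor, eval_C, mul_comm]
  · intro m _ hmj
    rw [eval_mul, eval_prod, prod_eq_zero (mem_erase.2 ⟨hmj.symm, hj'⟩) eval_basisDivisor_right,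
      zero_mul]

end Lagrange

theorem range_succ_erase_zero (k : ℕ) : (range (k + 1)).erase 0 = Icc 1 k := by
  ext j
  simp only [mem_erase, mem_range, mem_Icc]
  omega

theorem natCast_sq_sub_natCast_sq_ne_zero {a b : ℕ} (hab : a ≠ b) : (a : ℝ) ^ 2 - (b : ℝ) ^ 2 ≠ 0 :=
  sub_ne_zero.2 <| by exact_mod_cast (Nat.pow_left_injective two_ne_zero).ne hab

theorem sq_factorial_eq_mul_prod_erase {k i : ℕ} (hi : i ∈ Icc 1 k) :
    (k.factorial : ℝ) ^ 2 = (i : ℝ) ^ 2 * ∏ m ∈ (Icc 1 k).erase i, (m : ℝ) ^ 2 := by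
  rw [mul_prod_erase _ (fun m : ℕ => (m : ℝ) ^ 2) hi, prod_pow, ← Nat.cast_prod,
    ← Ico_add_one_right_eq_Icc, prod_Ico_id_eq_factorial]

theorem betaCoef_of_mem_Icc {k i : ℕ} (hi : i ∈ Icc 1 k) :
    betaCoef k i =
      ((i : ℝ) ^ 2)⁻¹ * ∏ m ∈ (Icc 1 k).erase i, (m : ℝ) ^ 2 / ((m : ℝ) ^ 2 - (i : ℝ) ^ 2) := by
  have hi0 : i ≠ 0 := by simp only [mem_Icc] at hi; omega
  have h0 : 0 ∈ (range (k + 1)).erase i := by simp only [mem_erase, mem_range]; omega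
  have h_split : ∏ j ∈ (range (k + 1)).erase i, ((i : ℝ) ^ 2 - (j : ℝ) ^ 2) =
      (i : ℝ) ^ 2 * ∏ m ∈ (Icc 1 k).erase i, ((i : ℝ) ^ 2 - (m : ℝ) ^ 2) := by
    rw [← mul_prod_erase _ _ h0, erase_right_comm, range_succ_erase_zero]
    simp
  have h_sign : ∏ m ∈ (Icc 1 k).erase i, ((i : ℝ) ^ 2 - (m : ℝ) ^ 2) =
      (-1) ^ (k - 1) * ∏ m ∈ (Icc 1 k).erase i, ((m : ℝ) ^ 2 - (i : ℝ) ^ 2) := by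
    rw [show k - 1 = #((Icc 1 k).erase i) by simp [card_erase_of_mem hi], ← prod_neg]
    simp
  have h_ne : ∏ m ∈ (Icc 1 k).erase i, ((m : ℝ) ^ 2 - (i : ℝ) ^ 2) ≠ 0 :=
    prod_ne_zero_iff.2 fun m hm => natCast_sq_sub_natCast_sq_ne_zero (ne_of_mem_erase hm)
  rw [betaCoef, if_neg hi0, h_split, h_sign, sq_factorial_eq_mul_prod_erase hi, prod_div_distrib]
  field_simp

section SquareNodes

variable {t₀ h : ℝ}

theorem sq_nodes_injective (hh : h ≠ 0) : Function.Injective fun j : ℕ => t₀ + (j : ℝ) ^ 2 * h :=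
  fun a b hab => by
    by_contra hne
    exact natCast_sq_sub_natCast_sq_ne_zero hne <| mul_right_cancel₀ hh (by linarith [hab])

theorem eval_derivative_basis_sq_nodes_zero (k : ℕ) (hh : h ≠ 0) :
    (derivative (Lagrange.basis (range (k + 1)) (fun j : ℕ => t₀ + (j : ℝ) ^ 2 * h) 0)).eval t₀ =
      betaCoef k 0 / h := by
  have h_self := eval_derivative_basis_self (sq_nodes_injective (t₀ := t₀) hh).injOn
    (mem_range.2 k.succ_pos)
  simp only [Nat.cast_zero, zero_pow two_ne_zero, zero_mul, add_zero] at h_self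
  rw [h_self, range_succ_erase_zero, betaCoef, if_pos rfl, neg_div, sum_div, ← sum_neg_distrib]
  exact sum_congr rfl fun j _ => by ring

theorem eval_derivative_basis_sq_nodes_of_ne_zero {k i : ℕ} (hh : h ≠ 0) (hi : i ∈ range (k + 1))
    (hi0 : i ≠ 0) :
    (derivative (Lagrange.basis (range (k + 1)) (fun j : ℕ => t₀ + (j : ℝ) ^ 2 * h) i)).eval t₀ =
      betaCoef k i / h := by
  have hi' : i ∈ Icc 1 k := by simp only [mem_range, mem_Icc] at hi ⊢; omega
  have h_ne := eval_derivative_basis_of_ne (v := fun j : ℕ => t₀ + (j : ℝ) ^ 2 * h) hi0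
    (mem_range.2 k.succ_pos)
  simp only [Nat.cast_zero, zero_pow two_ne_zero, zero_mul, add_zero] at h_ne
  have h_ratio : ∀ m ∈ (Icc 1 k).erase i,
      (t₀ - (t₀ + (m : ℝ) ^ 2 * h)) / (t₀ + (i : ℝ) ^ 2 * h - (t₀ + (m : ℝ) ^ 2 * h)) =
        (m : ℝ) ^ 2 / ((m : ℝ) ^ 2 - (i : ℝ) ^ 2) := fun m _ => by
    rw [show t₀ - (t₀ + (m : ℝ) ^ 2 * h) = (m : ℝ) ^ 2 * -h by ring,
      show t₀ + (i : ℝ) ^ 2 * h - (t₀ + (m : ℝ) ^ 2 * h) = ((m : ℝ) ^ 2 - (i : ℝ) ^ 2) * -h by ring,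
      mul_div_mul_right _ _ (neg_ne_zero.2 hh)]
  rw [h_ne, erase_right_comm, range_succ_erase_zero, prod_congr rfl h_ratio,
    betaCoef_of_mem_Icc hi']
  ring

end SquareNodes

theorem deriv_lagrange_nonequidistant_general (k : ℕ) (h : ℝ) (hh : h ≠ 0)
    (t₀ : ℝ) (u : ℕ → ℝ) :
    (Polynomial.derivative
        (Lagrange.interpolate (Finset.range (k + 1)) (fun i => t₀ + ((i : ℝ) ^ 2) * h)
          (fun i => u (i ^ 2)))).eval t₀
      = (1 / h) * ∑ i ∈ Finset.range (k + 1), betaCoef k i * u (i ^ 2) := by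
  rw [eval_derivative_interpolate, mul_sum]
  refine sum_congr rfl fun i hi => ?_
  obtain rfl | hi0 := eq_or_ne i 0
  · rw [eval_derivative_basis_sq_nodes_zero k hh]
    ring
  · rw [eval_derivative_basis_sq_nodes_of_ne_zero hh hi hi0]
    ring

/-- The derivative at `t₀` of the Lagrange interpolation polynomial through the
non-equidistant points `(t₀ + i²·h, u_{i²})`, `i = 0, …, k`, equals
`(1/h)·∑_{i=0}^k β_i^k u_{i²}`. -/
theorem deriv_lagrange_nonequidistant (k : ℕ) (hk : 1 ≤ k) (h : ℝ) (hh : h ≠ 0)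
    (t₀ : ℝ) (u : ℕ → ℝ) :
    (Polynomial.derivative
        (Lagrange.interpolate (Finset.range (k + 1)) (fun i => t₀ + ((i : ℝ) ^ 2) * h)
          (fun i => u (i ^ 2)))).eval t₀
      = (1 / h) * ∑ i ∈ Finset.range (k + 1), betaCoef k i * u (i ^ 2) :=
  deriv_lagrange_nonequidistant_general k h hh t₀ u
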